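/- arXiv:math/0112181 — 7 statements merged into one kernel-verified Lean document; each statement's English description precedes it below -/
import Mathlib

section
/- Let 1 ≤ p < ∞ and let T : ℓ^p → ℓ^p be a continuous linear operator. Then T is semi band preserving (for all f, g, if supp f ∩ supp(Tg) = ∅ then supp(Tf) ∩ supp(Tg) = ∅) if and only if T is a weighted conditional expectation operator; that is, if and only if there exist a countable index type J, nonzero elements (u_j)_{j∈J} of ℓ^p with pairwise disjoint supports, each u_j lying in the range of T, and nonzero continuous linear functionals (ψ_j)_{j∈J} on ℓ^p satisfying ψ_j f = 0 whenever supp f ∩ supp u_j = ∅, such that for every f ∈ ℓ^p the family (fun j => ψ_j(f) • u_j) has sum T f (HasSum). -/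
/-!
Write `eᵢ` for the unit vectors. If `T eᵢ` does not vanish at `i`, then for every `f` the vector
`g = f - c • eᵢ` with `c = T f i / T eᵢ i` has `T g i = 0`, i.e. `supp eᵢ` misses `supp T g`;
semi band preservation then makes `T g` vanish on `supp T eᵢ`, so `T f` is a multiple of `T eᵢ`
there. Consequently the supports of such `T eᵢ` (the bands) are equal or disjoint, and, since
the `eᵢ` span a dense subspace of `ℓ^p` for `p < ∞`, they cover the support of every `T f`.
Choosing one `i` per band gives `uᵢ = T eᵢ` and `ψᵢ f = T f i / T eᵢ i`; the condition on `ψᵢ`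
is semi band preservation applied to `g = eᵢ`.

Conversely, if `T f = ∑ ψⱼ(f) uⱼ` with disjoint `uⱼ`, then `T g` equals `ψⱼ(g) uⱼ` on `supp uⱼ`.
So when `T g` does not vanish somewhere on `supp uⱼ`, it does not vanish anywhere on it, and a
vector `f` disjoint from `T g` has `ψⱼ(f) = 0`, hence `T f = 0` on `supp uⱼ`.
-/

open scoped ENNReal
open Function Set

namespace lp

variable {ι J E : Type*} [NormedAddCommGroup E] {p : ℝ≥0∞}

theorem support_smul_subset {𝕜 : Type*} [NormedRing 𝕜] [Module 𝕜 E] [IsBoundedSMul 𝕜 E] (c : 𝕜)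
    (x : lp (fun _ : ι => E) p) : support (c • x) ⊆ support x := by
  rw [coeFn_smul]
  exact support_const_smul_subset c x

variable [Fact (1 ≤ p)] {x : lp (fun _ : ι => E) p} {y : J → lp (fun _ : ι => E) p}

@[simp]
theorem evalCLM_apply {𝕜 : Type*} [NormedRing 𝕜] [Module 𝕜 E] [IsBoundedSMul 𝕜 E] (k : ι)
    (x : lp (fun _ : ι => E) p) : evalCLM 𝕜 (fun _ : ι => E) p k x = x k :=
  rfl

theorem hasSum_apply (h : HasSum y x) (k : ι) : HasSum (fun j => y j k) (x k) :=
  h.map ((Pi.evalAddMonoidHom (fun _ : ι => E) k).comp (lp (fun _ : ι => E) p).subtype)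
    (lipschitzWith_one_eval p k).continuous

theorem support_subset_iUnion_of_hasSum (h : HasSum y x) : support x ⊆ ⋃ j, support (y j) := by
  intro k hk
  by_contra hnot
  simp only [mem_iUnion, mem_support, not_exists, not_not] at hnot
  exact hk ((hasSum_apply h k).unique (by simp [hnot]))

theorem eqOn_support_of_hasSum (hy : Pairwise (Disjoint on fun j => support (y j)))
    (h : HasSum y x) (j : J) : EqOn (y j) x (support (y j)) := fun k hk =>
  ((hasSum_apply h k).unique <| hasSum_single j fun _ hij =>
    notMem_support.1 fun hki => (hy hij).ne_of_mem hki hk rfl).symm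

theorem hasSum_of_eqOn_support (hp : p ≠ ⊤) (hy : Pairwise (Disjoint on fun j => support (y j)))
    (hagree : ∀ j, EqOn (y j) x (support (y j))) (hcover : support x ⊆ ⋃ j, support (y j)) :
    HasSum y x := by
  classical
  have hinj : Injective fun a : Σ j, support (y j) => (a.2 : ι) := by
    rintro ⟨i, k, hki⟩ ⟨j, k', hkj⟩ (rfl : k = k')
    obtain rfl : i = j := by_contra fun hij => (hy hij).ne_of_mem hki hkj rfl
    rfl
  have hx : HasSum (fun a : Σ j, support (y j) => lp.single p (a.2 : ι) (x a.2)) x := by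
    refine (hinj.hasSum_iff fun k hk => ?_).2 (lp.hasSum_single hp x)
    have : x k = 0 := notMem_support.1 fun hxk => hk <| by simpa using hcover hxk
    simp [this]
  refine hx.sigma fun j => ?_
  have hsupp : support (fun k => lp.single p k (y j k)) ⊆ support (y j) :=
    fun k hk => mem_support.2 fun h0 => hk (by simp [h0])
  exact ((hasSum_subtype_iff_of_support_subset hsupp).2 (lp.hasSum_single hp (y j))).congr_fun
    fun k => by simp [hagree j k.2]

end lp

universe u

section

variable {ι : Type u} {𝕜 : Type*} [NormedField 𝕜] {p : ℝ≥0∞} [Fact (1 ≤ p)]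

def SemiBandPreserving (T : lp (fun _ : ι => 𝕜) p →L[𝕜] lp (fun _ : ι => 𝕜) p) : Prop :=
  ∀ f g : lp (fun _ : ι => 𝕜) p,
    Disjoint (support f) (support (T g)) → Disjoint (support (T f)) (support (T g))

def IsWeightedCondExp (T : lp (fun _ : ι => 𝕜) p →L[𝕜] lp (fun _ : ι => 𝕜) p) : Prop :=
  ∃ (J : Type u) (_ : Countable J) (u : J → lp (fun _ : ι => 𝕜) p)
    (ψ : J → lp (fun _ : ι => 𝕜) p →L[𝕜] 𝕜),
    (∀ j, u j ≠ 0) ∧ (∀ j, u j ∈ range T) ∧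
    (Pairwise fun i j => Disjoint (support (u i)) (support (u j))) ∧
    (∀ j, ψ j ≠ 0) ∧
    (∀ j (f : lp (fun _ : ι => 𝕜) p), Disjoint (support f) (support (u j)) → ψ j f = 0) ∧
    ∀ f, HasSum (fun j => ψ j f • u j) (T f)

namespace SemiBandPreserving

variable {T : lp (fun _ : ι => 𝕜) p →L[𝕜] lp (fun _ : ι => 𝕜) p} (hT : SemiBandPreserving T)
include hT

section Single

variable [DecidableEq ι]

theorem disjoint_support_apply_single {g : lp (fun _ : ι => 𝕜) p} {i : ι} (hg : T g i = 0) :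
    Disjoint (support (T (lp.single p i 1))) (support (T g)) :=
  hT _ _ <| by
    rw [lp.coeFn_single, Pi.support_single_of_ne one_ne_zero, disjoint_singleton_left]
    exact notMem_support.2 hg

theorem apply_eq_div_mul_apply_single {i k : ι} (hi : T (lp.single p i 1) i ≠ 0)
    (hk : T (lp.single p i 1) k ≠ 0) (f : lp (fun _ : ι => 𝕜) p) :
    T f k = T f i / T (lp.single p i 1) i * T (lp.single p i 1) k := by
  set c := T f i / T (lp.single p i 1) i
  have hTg (k : ι) : T (f - c • lp.single p i 1) k = T f k - c * T (lp.single p i 1) k := by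
    rw [map_sub, map_smul, lp.coeFn_sub, lp.coeFn_smul, Pi.sub_apply, Pi.smul_apply, smul_eq_mul]
  have hg : T (f - c • lp.single p i 1) i = 0 := by rw [hTg, div_mul_cancel₀ _ hi, sub_self]
  have := (hT.disjoint_support_apply_single hg).notMem_of_mem_left (mem_support.2 hk)
  rwa [notMem_support, hTg, sub_eq_zero] at this

theorem apply_single_self_ne_zero {i : ι} (h : T (lp.single p i 1) ≠ 0) :
    T (lp.single p i 1) i ≠ 0 := by
  contrapose! h
  have := hT.disjoint_support_apply_single h
  rw [disjoint_self, bot_eq_empty, support_eq_empty_iff] at this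
  exact lp.ext this

theorem support_apply_single_subset {i k : ι} {f : lp (fun _ : ι => 𝕜) p}
    (hi : T (lp.single p i 1) i ≠ 0) (hki : k ∈ support (T (lp.single p i 1)))
    (hkf : k ∈ support (T f)) : support (T (lp.single p i 1)) ⊆ support (T f) := by
  have hc : T f i / T (lp.single p i 1) i ≠ 0 :=
    left_ne_zero_of_mul (by rwa [← hT.apply_eq_div_mul_apply_single hi hki f])
  intro k' hk'
  rw [mem_support, hT.apply_eq_div_mul_apply_single hi hk' f]
  exact mul_ne_zero hc hk'

theorem support_apply_single_eq_of_not_disjoint {i j : ι} (hi : T (lp.single p i 1) i ≠ 0)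
    (hj : T (lp.single p j 1) j ≠ 0)
    (h : ¬Disjoint (support (T (lp.single p i 1))) (support (T (lp.single p j 1)))) :
    support (T (lp.single p i 1)) = support (T (lp.single p j 1)) := by
  obtain ⟨k, hki, hkj⟩ := not_disjoint_iff.1 h
  exact (hT.support_apply_single_subset hi hki hkj).antisymm
    (hT.support_apply_single_subset hj hkj hki)

theorem exists_apply_single_ne_zero_of_apply_ne_zero (hp : p ≠ ⊤) {f : lp (fun _ : ι => 𝕜) p}
    {k : ι} (h : T f k ≠ 0) : ∃ i, T (lp.single p i 1) i ≠ 0 ∧ T (lp.single p i 1) k ≠ 0 := by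
  by_contra! hnone
  have hzero : (lp.evalCLM 𝕜 _ p k).comp T = 0 :=
    lp.ext_continuousLinearMap hp fun i => ContinuousLinearMap.ext_ring <| by
      by_contra hik
      exact hik (hnone i (hT.apply_single_self_ne_zero fun h0 => hik (by simp [h0])))
  exact h congr($hzero f)

end Single

theorem isWeightedCondExp [Countable ι] (hp : p ≠ ⊤) : IsWeightedCondExp T := by
  classical
  -- `R` contains exactly one generator `i` (with `T eᵢ i ≠ 0`) of each band.
  obtain ⟨R, hRA, hR⟩ := exists_subset_bijOn {i | T (lp.single p i 1) i ≠ 0}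
    fun i => support (T (lp.single p i 1))
  set u : R → lp (fun _ : ι => 𝕜) p := fun i => T (lp.single p i 1)
  set ψ : R → lp (fun _ : ι => 𝕜) p →L[𝕜] 𝕜 :=
    fun i => (u i i)⁻¹ • (lp.evalCLM 𝕜 (fun _ : ι => 𝕜) p (i : ι)).comp T
  have hu (i : R) : u i i ≠ 0 := hRA i.2
  have hu_disj : Pairwise (Disjoint on fun i => support (u i)) := fun i j hij =>
    by_contra fun h => hij <| Subtype.ext <|
      hR.injOn i.2 j.2 (hT.support_apply_single_eq_of_not_disjoint (hu i) (hu j) h)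
  have hψu (i : R) (f) {k} (hk : u i k ≠ 0) : (ψ i f • u i) k = T f k := by
    simp [ψ, u, hT.apply_eq_div_mul_apply_single (hu i) hk f, div_eq_inv_mul]
  refine ⟨R, inferInstance, u, ψ, fun i h0 => hu i (by simp [h0]), fun i => ⟨_, rfl⟩, hu_disj,
    fun i h0 => ?_, fun i f hf => ?_, fun f => ?_⟩
  · have := congr($h0 (lp.single p i 1))
    simp [ψ, u] at this
    exact hu i this
  · have := (hT f _ hf).notMem_of_mem_right (mem_support.2 (hu i))
    simp [ψ, notMem_support.1 this]
  have hsupp (i : R) := lp.support_smul_subset (ψ i f) (u i)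
  refine lp.hasSum_of_eqOn_support hp (fun i j hij => (hu_disj hij).mono (hsupp i) (hsupp j))
    (fun i k hk => hψu i f (hsupp i hk)) fun k hk => ?_
  obtain ⟨i, hi, hik⟩ := hT.exists_apply_single_ne_zero_of_apply_ne_zero hp hk
  obtain ⟨j, hj, hji⟩ := hR.surjOn ⟨i, hi, rfl⟩
  have hjk : u ⟨j, hj⟩ k ≠ 0 := by
    have hji : support (u ⟨j, hj⟩) = support (T (lp.single p i 1)) := hji
    rwa [← mem_support, hji, mem_support]
  exact mem_iUnion.2 ⟨⟨j, hj⟩, by rwa [mem_support, hψu _ _ hjk]⟩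

end SemiBandPreserving

theorem IsWeightedCondExp.semiBandPreserving
    {T : lp (fun _ : ι => 𝕜) p →L[𝕜] lp (fun _ : ι => 𝕜) p}
    (h : IsWeightedCondExp T) : SemiBandPreserving T := by
  obtain ⟨J, -, u, ψ, -, -, hu, -, hψ, hsum⟩ := h
  have hsupp (j : J) (c : 𝕜) := lp.support_smul_subset c (u j)
  intro f g hfg
  refine disjoint_left.2 fun k hkf hkg => ?_
  obtain ⟨j, hkj⟩ := mem_iUnion.1 (lp.support_subset_iUnion_of_hasSum (hsum g) hkg)
  obtain ⟨i, hki⟩ := mem_iUnion.1 (lp.support_subset_iUnion_of_hasSum (hsum f) hkf)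
  obtain rfl : i = j :=
    by_contra fun hij => (hu hij).ne_of_mem (hsupp i _ hki) (hsupp j _ hkj) rfl
  have hψg : ψ i g ≠ 0 := fun h0 => hkj (by simp [h0])
  have hg : support (u i) ⊆ support (T g) := by
    intro k' hk'
    have hk'g : k' ∈ support (ψ i g • u i) := by simpa [hψg] using hk'
    rw [mem_support, ← lp.eqOn_support_of_hasSum
      (fun a b hab => (hu hab).mono (hsupp a _) (hsupp b _)) (hsum g) i hk'g]
    exact hk'g
  exact hki (by simp [hψ i f (hfg.mono_right hg)])

theorem semiBandPreserving_iff_isWeightedCondExp [Countable ι] (hp : p ≠ ⊤)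
    {T : lp (fun _ : ι => 𝕜) p →L[𝕜] lp (fun _ : ι => 𝕜) p} :
    SemiBandPreserving T ↔ IsWeightedCondExp T :=
  ⟨fun hT => hT.isWeightedCondExp hp, IsWeightedCondExp.semiBandPreserving⟩

end

/-- For `1 ≤ p < ∞`, a continuous linear operator `T` on `ℓ^p` is semi band
preserving iff it is a weighted conditional expectation operator. -/
theorem lp_semiBandPreserving_iff_weightedCondExp
    (p : ℝ≥0∞) [Fact (1 ≤ p)] (hp : p ≠ ⊤)
    (T : lp (fun _ : ℕ => ℝ) p →L[ℝ] lp (fun _ : ℕ => ℝ) p) :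
    (∀ f g : lp (fun _ : ℕ => ℝ) p,
        {n : ℕ | f n ≠ 0} ∩ {n : ℕ | T g n ≠ 0} = ∅ →
        {n : ℕ | T f n ≠ 0} ∩ {n : ℕ | T g n ≠ 0} = ∅) ↔
    ∃ (J : Type) (_ : Countable J) (u : J → lp (fun _ : ℕ => ℝ) p)
      (ψ : J → lp (fun _ : ℕ => ℝ) p →L[ℝ] ℝ),
      (∀ j, u j ≠ 0) ∧ (∀ j, u j ∈ Set.range T) ∧
      (Pairwise fun i j => {n : ℕ | u i n ≠ 0} ∩ {n : ℕ | u j n ≠ 0} = ∅) ∧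
      (∀ j, ψ j ≠ 0) ∧
      (∀ j, ∀ f : lp (fun _ : ℕ => ℝ) p,
        {n : ℕ | f n ≠ 0} ∩ {n : ℕ | u j n ≠ 0} = ∅ → ψ j f = 0) ∧
      (∀ f : lp (fun _ : ℕ => ℝ) p, HasSum (fun j => ψ j f • u j) (T f)) := by
  have h := semiBandPreserving_iff_isWeightedCondExp hp (T := T)
  simp only [SemiBandPreserving, IsWeightedCondExp, disjoint_iff_inter_eq_empty] at h
  exact h
end

section
/- Let X be a real Banach lattice and T : X → X a continuous linear operator. Suppose there exist an index type J, a family (u_j)_{j∈J} of pairwise disjoint nonzero elements of X, and continuous linear functionals (ψ_j)_{j∈J} on X satisfying ψ_j f = 0 whenever f ⊥ u_j, such that for every f ∈ X the family (fun j => ψ_j(f) • u_j) has sum T f (HasSum). Then T is semi containment preserving: for all f, g ∈ X, f ◁ Tg implies Tf ◁ Tg. -/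
/-!
Write `x ⊥ y` for `|x| ⊓ |y| = 0`; the elements disjoint from a fixed `a` form a closed subspace,
so disjointness passes to sums of series. Given `h ⊥ T g`, it suffices that every term `ψ j f • u j`
of `T f` is disjoint from `h`. Since the `u i` are pairwise disjoint, `T g - ψ j g • u j ⊥ u j`.
If `ψ j g = 0` this says `T g ⊥ u j`, so `f ⊥ u j` by hypothesis and `ψ j f = 0`. Otherwise
`w = |h| ⊓ |u j|` is disjoint from `T g` and from `T g - ψ j g • u j`, hence from `u j`;
as `w ≤ |u j|`, this forces `w = 0`, i.e. `h ⊥ u j`.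
-/

section Disjointness

variable {𝕜 X : Type*} [Field 𝕜] [LinearOrder 𝕜] [IsStrictOrderedRing 𝕜]
  [AddCommGroup X] [Lattice X] [Module 𝕜 X] [PosSMulMono 𝕜 X]

lemma abs_smul_le_smul_abs (c : 𝕜) (x : X) : |c • x| ≤ |c| • |x| := by
  have h₁ : |c| • x ≤ |c| • |x| := smul_le_smul_of_nonneg_left (le_abs_self x) (abs_nonneg c)
  have h₂ : |c| • -x ≤ |c| • |x| := smul_le_smul_of_nonneg_left (neg_le_abs x) (abs_nonneg c)
  rcases abs_choice c with hc | hc <;> rw [hc] at h₁ h₂ ⊢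
  · exact abs_le'.2 ⟨h₁, by rwa [← smul_neg]⟩
  · exact abs_le'.2 ⟨by rwa [neg_smul_neg] at h₂, by rwa [neg_smul] at h₁⟩

variable [IsOrderedAddMonoid X]

lemma inf_add_le_inf_add_inf {a b c : X} (ha : 0 ≤ a) (hb : 0 ≤ b) (hc : 0 ≤ c) :
    a ⊓ (b + c) ≤ a ⊓ b + a ⊓ c := by
  rw [← sub_le_iff_le_add', sub_inf]
  refine sup_le ((sub_nonpos.mpr inf_le_left).trans (le_inf ha hc)) (le_inf ?_ ?_)
  · exact sub_le_iff_le_add.mpr (inf_le_left.trans (le_add_of_nonneg_right hb))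
  · exact sub_le_iff_le_add.mpr (inf_le_right.trans_eq (add_comm _ _))

lemma inf_smul_eq_zero_of_inf_eq_zero {a b : X} (ha : 0 ≤ a) (hb : 0 ≤ b) (hab : a ⊓ b = 0)
    {t : 𝕜} (ht : 0 ≤ t) : a ⊓ t • b = 0 := by
  set s : 𝕜 := max t 1
  have hs : 0 < s := one_pos.trans_le (le_max_right _ _)
  refine le_antisymm ?_ (le_inf ha (smul_nonneg ht hb))
  calc a ⊓ t • b ≤ s • a ⊓ s • b :=
        inf_le_inf (le_smul_of_one_le_left ha (le_max_right _ _))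
          (smul_le_smul_of_nonneg_right (le_max_left _ _) hb)
    _ = s • (a ⊓ b) := ((OrderIso.smulRight (β := X) hs).map_inf a b).symm
    _ = 0 := by rw [hab, smul_zero]

variable (𝕜) in
def disjointComplement (a : X) : Submodule 𝕜 X where
  carrier := {x | |x| ⊓ |a| = 0}
  zero_mem' := by simp
  add_mem' {x y} hx hy := by
    refine le_antisymm ?_ (le_inf (abs_nonneg _) (abs_nonneg _))
    calc |x + y| ⊓ |a| ≤ |a| ⊓ (|x| + |y|) := by
          rw [inf_comm]; exact inf_le_inf_left _ (abs_add_le x y)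
      _ ≤ |a| ⊓ |x| + |a| ⊓ |y| :=
          inf_add_le_inf_add_inf (abs_nonneg _) (abs_nonneg _) (abs_nonneg _)
      _ = 0 := by simp_all [inf_comm]
  smul_mem' c x hx := by
    refine le_antisymm ?_ (le_inf (abs_nonneg _) (abs_nonneg _))
    calc |c • x| ⊓ |a| ≤ (|c| • |x|) ⊓ |a| := inf_le_inf_right _ (abs_smul_le_smul_abs c x)
      _ = 0 := by
        rw [inf_comm]
        exact inf_smul_eq_zero_of_inf_eq_zero (abs_nonneg a) (abs_nonneg x) (by rwa [inf_comm])
          (abs_nonneg c)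

variable {a x y u : X}

lemma mem_disjointComplement : x ∈ disjointComplement 𝕜 a ↔ |x| ⊓ |a| = 0 := Iff.rfl

lemma mem_disjointComplement_comm :
    x ∈ disjointComplement 𝕜 a ↔ a ∈ disjointComplement 𝕜 x := by
  simp only [mem_disjointComplement, inf_comm]

lemma mem_disjointComplement_of_abs_le (hyx : |y| ≤ |x|) (hx : x ∈ disjointComplement 𝕜 a) :
    y ∈ disjointComplement 𝕜 a :=
  le_antisymm (hx ▸ inf_le_inf_right _ hyx) (le_inf (abs_nonneg _) (abs_nonneg _))

lemma disjointComplement_le_of_sub_smul_mem {c : 𝕜} (hc : c ≠ 0)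
    (hxu : x - c • u ∈ disjointComplement 𝕜 u) :
    disjointComplement 𝕜 x ≤ disjointComplement 𝕜 u := by
  intro h hh
  set w := |h| ⊓ |u|
  have hw : |w| = w := abs_of_nonneg (le_inf (abs_nonneg _) (abs_nonneg _))
  have hxw : x ∈ disjointComplement 𝕜 w :=
    mem_disjointComplement_comm.1 <| mem_disjointComplement_of_abs_le (hw.trans_le inf_le_left) hh
  have hxuw : x - c • u ∈ disjointComplement 𝕜 w :=
    mem_disjointComplement_comm.1 <| mem_disjointComplement_of_abs_le (hw.trans_le inf_le_right)
      (mem_disjointComplement_comm.1 hxu)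
  have huw : u ∈ disjointComplement 𝕜 w :=
    (Submodule.smul_mem_iff _ hc).1 (by simpa using sub_mem hxw hxuw)
  have : |u| ⊓ w = w := inf_eq_right.2 inf_le_right
  rwa [mem_disjointComplement, hw, this] at huw

section Topology

variable [TopologicalSpace X] [TopologicalLattice X] [IsTopologicalAddGroup X] [T1Space X]

lemma isClosed_disjointComplement (a : X) : IsClosed (disjointComplement 𝕜 a : Set X) :=
  isClosed_singleton.preimage ((continuous_id.sup continuous_neg).inf continuous_const)

lemma HasSum.mem_disjointComplement {ι : Type*} {f : ι → X} {s : X} (hf : HasSum f s)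
    (h : ∀ i, f i ∈ disjointComplement 𝕜 a) : s ∈ disjointComplement 𝕜 a :=
  hf.tsum_eq ▸ tsum_mem (isClosed_disjointComplement a) h

lemma HasSum.sub_smul_mem_disjointComplement {ι : Type*} {u : ι → X}
    (hu : Pairwise fun i j => |u i| ⊓ |u j| = 0) {c : ι → 𝕜} {s : X}
    (hs : HasSum (fun i => c i • u i) s) (j : ι) :
    s - c j • u j ∈ disjointComplement 𝕜 (u j) := by
  classical
  have hs' := hs.update j 0
  rw [zero_sub, neg_add_eq_sub] at hs'
  refine hs'.mem_disjointComplement fun i => ?_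
  rcases eq_or_ne i j with rfl | hij
  · simp
  · simpa [hij] using Submodule.smul_mem _ (c i) (hu hij)

end Topology

end Disjointness

theorem weightedCondExp_semiContainmentPreserving_general
    {X : Type*} [NormedAddCommGroup X] [Lattice X] [HasSolidNorm X] [IsOrderedAddMonoid X]
    [NormedSpace ℝ X]
    [PosSMulStrictMono ℝ X]
    (T : X →L[ℝ] X)
    (hT : ∃ (J : Type) (u : J → X) (ψ : J → X →L[ℝ] ℝ),
      (∀ j, u j ≠ 0) ∧
      (Pairwise fun i j => |u i| ⊓ |u j| = 0) ∧
      (∀ j, ∀ f : X, |f| ⊓ |u j| = 0 → ψ j f = 0) ∧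
      (∀ f : X, HasSum (fun j => ψ j f • u j) (T f))) :
    ∀ f g : X, (∀ h : X, |h| ⊓ |T g| = 0 → |h| ⊓ |f| = 0) →
      (∀ h : X, |h| ⊓ |T g| = 0 → |h| ⊓ |T f| = 0) := by
  obtain ⟨J, u, ψ, -, hdisj, hψ, hsum⟩ := hT
  intro f g hfg h hh
  change disjointComplement ℝ (T g) ≤ disjointComplement ℝ f at hfg
  change h ∈ disjointComplement ℝ (T g) at hh
  change h ∈ disjointComplement ℝ (T f)
  rw [mem_disjointComplement_comm]
  refine (hsum f).mem_disjointComplement fun j => ?_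
  have hTg := (hsum g).sub_smul_mem_disjointComplement hdisj j
  by_cases hj : ψ j g = 0
  · rw [hj, zero_smul, sub_zero] at hTg
    have hfu : ψ j f = 0 :=
      hψ j f <| mem_disjointComplement_comm.1 <| hfg <| mem_disjointComplement_comm.1 hTg
    simp [hfu]
  · exact Submodule.smul_mem _ _ <| mem_disjointComplement_comm.1 <|
      disjointComplement_le_of_sub_smul_mem hj hTg hh

/-- Every weighted conditional expectation operator on a real Banach lattice
is semi containment preserving. -/
theorem weightedCondExp_semiContainmentPreserving
    {X : Type*} [NormedAddCommGroup X] [Lattice X] [HasSolidNorm X] [IsOrderedAddMonoid X]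
    [NormedSpace ℝ X]
    [CompleteSpace X] [PosSMulStrictMono ℝ X] [PosSMulReflectLT ℝ X]
    (T : X →L[ℝ] X)
    (hT : ∃ (J : Type) (u : J → X) (ψ : J → X →L[ℝ] ℝ),
      (∀ j, u j ≠ 0) ∧
      (Pairwise fun i j => |u i| ⊓ |u j| = 0) ∧
      (∀ j, ∀ f : X, |f| ⊓ |u j| = 0 → ψ j f = 0) ∧
      (∀ f : X, HasSum (fun j => ψ j f • u j) (T f))) :
    ∀ f g : X, (∀ h : X, |h| ⊓ |T g| = 0 → |h| ⊓ |f| = 0) →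
      (∀ h : X, |h| ⊓ |T g| = 0 → |h| ⊓ |T f| = 0) :=
  weightedCondExp_semiContainmentPreserving_general T hT
end

section
/- Let (Ω, Σ, μ) be a σ-finite measure space, 1 ≤ p < ∞, and let T be a linear operator on X = Lp(Ω, μ; ℝ). Then for all f, g ∈ X there exists h ∈ X such that the support of T h equals the union of the support of T f and the support of T g, up to a μ-null set. -/
/-!
Only the two images `F = T f` and `G = T g` matter: take `h = f + c • g`, so that `T h = F + c • G`
almost everywhere. This has support `supp F ∪ supp G` except on the set where `G ≠ 0` and
`F / G = -c`. These exceptional sets are level sets of `F / G` on `supp G`, hence pairwise disjoint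
in `c`; by σ-finiteness only countably many of them have positive measure, and `ℝ` is uncountable.
-/

open MeasureTheory Function Set Filter

open scoped ENNReal

section SupportAddSMul

variable {Ω 𝕜 : Type*} [Field 𝕜] {F G : Ω → 𝕜} {c : 𝕜}

lemma support_add_smul_subset_union : support (F + c • G) ⊆ support F ∪ support G :=
  (support_add F (c • G)).trans (union_subset_union_right _ (support_const_smul_subset c G))

lemma support_union_subset_support_add_smul_union :
    support F ∪ support G ⊆ support (F + c • G) ∪ ({x | F x / G x = -c} ∩ support G) := by
  intro x hx
  by_cases hGx : G x = 0
  · left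
    simpa [hGx] using hx
  · by_cases hsum : F x + c * G x = 0
    · right
      refine ⟨?_, hGx⟩
      rw [mem_ofPred_eq, div_eq_iff hGx]
      linear_combination hsum
    · left
      simpa using hsum

variable [MeasurableSpace Ω] {μ : Measure Ω}

lemma support_add_smul_ae_eq_union_of_null (hc : μ ({x | F x / G x = -c} ∩ support G) = 0) :
    support (F + c • G) =ᵐ[μ] (support F ∪ support G : Set Ω) :=
  (LE.le.eventuallyLE support_add_smul_subset_union).antisymm <|
    (LE.le.eventuallyLE support_union_subset_support_add_smul_union).trans_eq
      (union_ae_eq_left_of_ae_eq_empty (ae_eq_empty.2 hc))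

lemma exists_support_add_smul_ae_eq_union [SFinite μ] [MeasurableSpace 𝕜]
    [MeasurableSingletonClass 𝕜] [MeasurableDiv₂ 𝕜] [Uncountable 𝕜]
    (hF : Measurable F) (hG : Measurable G) :
    ∃ c : 𝕜, support (F + c • G) =ᵐ[μ] (support F ∪ support G : Set Ω) := by
  have hGsupp : MeasurableSet (support G) := hG (measurableSet_singleton 0).compl
  have hbad : {t : 𝕜 | 0 < μ.restrict (support G) {x | F x / G x = t}}.Countable :=
    Measure.countable_meas_level_set_pos (hF.div hG)
  obtain ⟨t, ht⟩ : ∃ t, 0 = μ.restrict (support G) {x | F x / G x = t} := by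
    by_contra! hpos
    exact not_countable_univ (hbad.mono fun t _ => (hpos t).symm.bot_lt)
  refine ⟨-t, support_add_smul_ae_eq_union_of_null ?_⟩
  rw [neg_neg, ← Measure.restrict_apply' hGsupp, ← ht]

end SupportAddSMul

theorem exists_support_eq_union_general
    {Ω : Type*} [MeasurableSpace Ω] (μ : Measure Ω) [SigmaFinite μ]
    (p : ℝ≥0∞)
    (T : Lp ℝ p μ →ₗ[ℝ] Lp ℝ p μ) (f g : Lp ℝ p μ) :
    ∃ h : Lp ℝ p μ,
      Function.support ⇑(T h) =ᵐ[μ]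
        ((Function.support ⇑(T f) ∪ Function.support ⇑(T g) : Set Ω)) := by
  obtain ⟨c, hc⟩ := exists_support_add_smul_ae_eq_union (μ := μ)
    (Lp.stronglyMeasurable (T f)).measurable (Lp.stronglyMeasurable (T g)).measurable
  refine ⟨f + c • g, EventuallyEq.trans ?_ hc⟩
  have hT : ⇑(T (f + c • g)) =ᵐ[μ] ⇑(T f) + c • ⇑(T g) := by
    rw [map_add, map_smul]
    filter_upwards [Lp.coeFn_add (T f) (c • T g), Lp.coeFn_smul c (T g)] with x hadd hsmul
    rw [hadd, Pi.add_apply, hsmul, Pi.add_apply]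
  exact hT.support

/-- For a linear operator `T` on `Lp(Ω, μ; ℝ)` (`μ` σ-finite, `1 ≤ p < ∞`) and
`f, g ∈ Lp`, there is `h ∈ Lp` whose image has support equal (mod `μ`) to the union of the
supports of `T f` and `T g`. -/
theorem exists_support_eq_union
    {Ω : Type*} [MeasurableSpace Ω] (μ : Measure Ω) [SigmaFinite μ]
    (p : ℝ≥0∞) [Fact (1 ≤ p)] (hp : p ≠ ⊤)
    (T : Lp ℝ p μ →ₗ[ℝ] Lp ℝ p μ) (f g : Lp ℝ p μ) :
    ∃ h : Lp ℝ p μ,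
      Function.support ⇑(T h) =ᵐ[μ]
        ((Function.support ⇑(T f) ∪ Function.support ⇑(T g) : Set Ω)) :=
  exists_support_eq_union_general μ p T f g
end

section
/- Let (Ω, Σ, μ) be a σ-finite measure space, 1 ≤ p < ∞, and let T be a continuous linear operator on X = Lp(Ω, μ; ℝ). If (f_j)_{j∈ℕ} is a sequence in X such that the supports of the functions T f_j are pairwise disjoint up to μ-null sets, then there exists h ∈ X such that the support of T h equals ⋃_{j∈ℕ} supp(T f_j), up to a μ-null set. -/
/-!
Rescale so that `h := ∑' j, c j • f j` converges in `Lp` with `c j > 0`. Then `T h = ∑' j, c j • T f j`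
in `Lp`, and a subsequence of the partial sums converges a.e. Off a null set every point lies in
the support of at most one `T f j`, so there the pointwise series has at most one nonzero term
and `T h x ≠ 0` exactly when some `T f j x ≠ 0`.
-/

open MeasureTheory Filter Function
open scoped ENNReal

lemma tsum_ne_zero_iff_of_support_subsingleton {ι M : Type*} [AddCommMonoid M]
    [TopologicalSpace M] {a : ι → M} (ha : (support a).Subsingleton) :
    ∑' i, a i ≠ 0 ↔ ∃ i, a i ≠ 0 := by
  constructor
  · intro h
    by_contra! hzero
    exact h (by simp [hzero])
  · rintro ⟨i, hi⟩
    rwa [tsum_eq_single i fun j hj => notMem_support.1 fun hj' => hj (ha hj' hi)]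

lemma ae_subsingleton_setOf_mem_of_pairwise_aedisjoint {ι Ω : Type*} [Countable ι]
    [MeasurableSpace Ω] {μ : Measure Ω} {s : ι → Set Ω} (hs : Pairwise (AEDisjoint μ on s)) :
    ∀ᵐ x ∂μ, {i | x ∈ s i}.Subsingleton := by
  have hpair (i j : ι) : ∀ᵐ x ∂μ, x ∈ s i → x ∈ s j → i = j := by
    by_cases hij : i = j
    · exact Eventually.of_forall fun _ _ _ => hij
    · filter_upwards [measure_eq_zero_iff_ae_notMem.1 (hs hij)] with x hx hi hj
      exact absurd ⟨hi, hj⟩ hx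
  filter_upwards [ae_all_iff.2 fun i => ae_all_iff.2 (hpair i)] with x hx i hi j hj
  exact hx i j hi hj

lemma exists_pos_summable_norm_smul {E : Type*} [SeminormedAddCommGroup E] [NormedSpace ℝ E]
    (v : ℕ → E) : ∃ c : ℕ → ℝ, (∀ j, 0 < c j) ∧ Summable fun j => ‖c j • v j‖ := by
  refine ⟨fun j => (1 / 2) ^ j / (1 + ‖v j‖), fun j => by positivity, ?_⟩
  refine summable_geometric_two.of_nonneg_of_le (fun j => norm_nonneg _) fun j => ?_
  rw [norm_smul, Real.norm_of_nonneg (by positivity), div_mul_eq_mul_div,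
    div_le_iff₀ (by positivity)]
  gcongr
  linarith

namespace MeasureTheory.Lp

variable {Ω E : Type*} [MeasurableSpace Ω] {μ : Measure Ω} [NormedAddCommGroup E]
  {p : ℝ≥0∞}

lemma support_smul_ae_eq {𝕜 : Type*} [NormedField 𝕜] [NormedSpace 𝕜 E] {c : 𝕜} (hc : c ≠ 0)
    (f : Lp E p μ) : support ⇑(c • f) =ᵐ[μ] support ⇑f := by
  filter_upwards [coeFn_smul c f] with x hx
  change (x ∈ support _) = (x ∈ support _)
  simp [hx, hc]

variable [Fact (1 ≤ p)]

lemma ae_eq_tsum_of_hasSum {g : ℕ → Lp E p μ} {s : Lp E p μ} (hg : HasSum g s)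
    (hsum : ∀ᵐ x ∂μ, Summable fun j => g j x) :
    s =ᵐ[μ] fun x => ∑' j, g j x := by
  obtain ⟨ns, hns, hlim⟩ :=
    (tendstoInMeasure_of_tendsto_Lp hg.tendsto_sum_nat).exists_seq_tendsto_ae
  have hpartial : ∀ᵐ x ∂μ, ∀ n, (∑ j ∈ Finset.range n, g j) x = ∑ j ∈ Finset.range n, g j x :=
    ae_all_iff.2 fun n => coeFn_fun_finsetSum _ _
  filter_upwards [hlim, hpartial, hsum] with x hx hpx hsx
  refine tendsto_nhds_unique hx ?_
  simp only [hpx]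
  exact hsx.hasSum.tendsto_sum_nat.comp hns.tendsto_atTop

lemma support_ae_eq_iUnion_of_hasSum {g : ℕ → Lp E p μ} {s : Lp E p μ} (hg : HasSum g s)
    (hdisj : Pairwise (AEDisjoint μ on fun j => support ⇑(g j))) :
    support ⇑s =ᵐ[μ] ⋃ j, support ⇑(g j) := by
  have hsub := ae_subsingleton_setOf_mem_of_pairwise_aedisjoint hdisj
  have hsum : ∀ᵐ x ∂μ, Summable fun j => g j x := hsub.mono fun x hx =>
    summable_of_hasFiniteSupport hx.finite
  filter_upwards [ae_eq_tsum_of_hasSum hg hsum, hsub] with x hx hxsub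
  change (x ∈ support _) = (x ∈ ⋃ j, support _)
  simp only [Set.mem_iUnion, mem_support, eq_iff_iff, hx]
  exact tsum_ne_zero_iff_of_support_subsingleton hxsub

end MeasureTheory.Lp

theorem exists_support_eq_iUnion_general
    {Ω : Type*} [MeasurableSpace Ω] (μ : Measure Ω)
    (p : ℝ≥0∞) [Fact (1 ≤ p)]
    (T : Lp ℝ p μ →L[ℝ] Lp ℝ p μ) (f : ℕ → Lp ℝ p μ)
    (hdisj : Pairwise fun i j =>
      μ (Function.support ⇑(T (f i)) ∩ Function.support ⇑(T (f j))) = 0) :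
    ∃ h : Lp ℝ p μ,
      Function.support ⇑(T h) =ᵐ[μ]
        ((⋃ j : ℕ, Function.support ⇑(T (f j)) : Set Ω)) := by
  obtain ⟨c, hc_pos, hc_sum⟩ := exists_pos_summable_norm_smul f
  have hTh : HasSum (fun j => c j • T (f j)) (T (∑' j, c j • f j)) := by
    simpa only [map_smul] using hc_sum.of_norm.hasSum.mapL T
  have hsupp (j : ℕ) : support ⇑(c j • T (f j)) =ᵐ[μ] support ⇑(T (f j)) :=
    Lp.support_smul_ae_eq (hc_pos j).ne' _
  refine ⟨∑' j, c j • f j, ?_⟩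
  refine (Lp.support_ae_eq_iUnion_of_hasSum hTh fun i j hij => ?_).trans
    (Filter.EventuallyEq.countable_iUnion hsupp)
  exact AEDisjoint.congr (hdisj hij) (hsupp i) (hsupp j)

/-- For a continuous linear operator `T` on `Lp(Ω, μ; ℝ)` (`μ` σ-finite,
`1 ≤ p < ∞`) and a sequence `f_j` such that the supports of `T f_j` are pairwise a.e. disjoint,
there is `h ∈ Lp` with support of `T h` equal (mod `μ`) to `⋃ j, supp (T f_j)`. -/
theorem exists_support_eq_iUnion
    {Ω : Type*} [MeasurableSpace Ω] (μ : Measure Ω) [SigmaFinite μ]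
    (p : ℝ≥0∞) [Fact (1 ≤ p)] (hp : p ≠ ⊤)
    (T : Lp ℝ p μ →L[ℝ] Lp ℝ p μ) (f : ℕ → Lp ℝ p μ)
    (hdisj : Pairwise fun i j =>
      μ (Function.support ⇑(T (f i)) ∩ Function.support ⇑(T (f j))) = 0) :
    ∃ h : Lp ℝ p μ,
      Function.support ⇑(T h) =ᵐ[μ]
        ((⋃ j : ℕ, Function.support ⇑(T (f j)) : Set Ω)) :=
  exists_support_eq_iUnion_general μ p T f hdisj
end

section
/- Let 1 ≤ p < ∞ and let T : ℓ^p → ℓ^p be a continuous linear operator that is semi band preserving. If f, g ∈ ℓ^p satisfy supp(Tg) ⊆ supp(Tf), then there exists h ∈ ℓ^p with supp(Th) = supp(Tf) \ supp(Tg). -/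
/-!
Take `h = f₂`, where `f = f₁ + f₂` with `f₁` the part of `f` on `supp (T g)` and `f₂` the
part off it. Semi band preservation gives at once that `T f₂` is disjoint from `T g` and from
`T f₁`. The real point is that `T f₁` vanishes on `supp (T f) \ supp (T g)`: for `k ∈ supp (T g)`
the combination `u = (T f k) • g - (T g k) • f` has `T u k = 0`, so `e_k` is disjoint from `T u`
and hence `T e_k` vanishes wherever `T u` does not, in particular on `supp (T f) \ supp (T g)`;
as `p < ∞` the unit vectors span a dense subspace, so the same holds for `T f₁`.
-/

open scoped ENNReal
open Function

namespace lp

variable {ι E : Type*} [NormedAddCommGroup E] {p : ℝ≥0∞}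

noncomputable def indicator (s : Set ι) (f : lp (fun _ : ι => E) p) : lp (fun _ : ι => E) p :=
  ⟨s.indicator f, (lp.memℓp f).mono' fun _ => norm_indicator_le_norm_self _ _⟩

@[simp]
theorem coe_indicator (s : Set ι) (f : lp (fun _ : ι => E) p) :
    ⇑(indicator s f) = s.indicator f :=
  rfl

theorem indicator_add_indicator_compl (s : Set ι) (f : lp (fun _ : ι => E) p) :
    indicator s f + indicator sᶜ f = f := by
  ext i
  rw [lp.coeFn_add, coe_indicator, coe_indicator, Set.indicator_self_add_compl]

theorem apply_eq_zero_of_forall_apply_single_eq_zero {𝕜 : Type*} [NormedField 𝕜]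
    [NormedSpace 𝕜 E] [DecidableEq ι] [Fact (1 ≤ p)] (hp : p ≠ ⊤) {F : Type*}
    [NormedAddCommGroup F] [NormedSpace 𝕜 F] (φ : lp (fun _ : ι => E) p →L[𝕜] F)
    (x : lp (fun _ : ι => E) p)
    (h : ∀ k, φ (lp.single p k (x k)) = 0) : φ x = 0 :=
  (φ.hasSum (lp.hasSum_single hp x)).unique (by simpa only [h] using hasSum_zero)

end lp

section SemiBandPreserving

variable {ι 𝕜 : Type*} [NormedField 𝕜] {p : ℝ≥0∞} [Fact (1 ≤ p)]

def IsSemiBandPreserving (T : lp (fun _ : ι => 𝕜) p →L[𝕜] lp (fun _ : ι => 𝕜) p) : Prop :=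
  ∀ f g : lp (fun _ : ι => 𝕜) p,
    Disjoint (support f) (support (T g)) → Disjoint (support (T f)) (support (T g))

namespace IsSemiBandPreserving

variable {T : lp (fun _ : ι => 𝕜) p →L[𝕜] lp (fun _ : ι => 𝕜) p} (hT : IsSemiBandPreserving T)
include hT

theorem apply_single_eq_zero [DecidableEq ι] {u : lp (fun _ : ι => 𝕜) p} {k n : ι}
    (hk : T u k = 0) (hn : T u n ≠ 0) (c : 𝕜) : T (lp.single p k c) n = 0 := by
  have hdisj : Disjoint (support (lp.single p k c)) (support (T u)) := by
    refine Set.disjoint_left.2 fun i hi hiu => ?_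
    obtain rfl : i = k :=
      by_contra fun hik => hi (lp.single_apply_ne (E := fun _ => 𝕜) p k c hik)
    exact hiu hk
  exact not_ne_iff.1 (Set.disjoint_right.1 (hT _ _ hdisj) hn)

theorem apply_single_eq_zero_of_apply_ne_zero [DecidableEq ι] {f g : lp (fun _ : ι => 𝕜) p}
    {k n : ι} (hgk : T g k ≠ 0) (hgn : T g n = 0) (hfn : T f n ≠ 0) (c : 𝕜) :
    T (lp.single p k c) n = 0 :=
  have hTu : ∀ i, T (T f k • g - T g k • f) i = T f k * T g i - T g k * T f i := by
    simp only [map_sub, map_smul, lp.coeFn_sub, lp.coeFn_smul, Pi.sub_apply, Pi.smul_apply,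
      smul_eq_mul, implies_true]
  hT.apply_single_eq_zero (by rw [hTu, mul_comm, sub_self]) (by rw [hTu, hgn]; simp [hgk, hfn]) c

theorem apply_indicator_support_eq_zero (hp : p ≠ ⊤) {f g : lp (fun _ : ι => 𝕜) p} {n : ι}
    (hgn : T g n = 0) (hfn : T f n ≠ 0) (x : lp (fun _ : ι => 𝕜) p) :
    T (lp.indicator (support (T g)) x) n = 0 := by
  classical
  refine lp.apply_eq_zero_of_forall_apply_single_eq_zero hp ((lp.evalCLM 𝕜 _ p n).comp T) _
    fun k => ?_
  by_cases hgk : T g k = 0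
  · simp [hgk]
  · exact hT.apply_single_eq_zero_of_apply_ne_zero hgk hgn hfn _

theorem disjoint_support_apply_indicator_compl (g x : lp (fun _ : ι => 𝕜) p) :
    Disjoint (support (T (lp.indicator (support (T g))ᶜ x))) (support (T g)) :=
  hT _ _ <| Set.disjoint_left.2 fun i hi hgi => hi (by simp [hgi])

end IsSemiBandPreserving

end SemiBandPreserving

theorem lp_sbp_exists_support_eq_diff_general
    (p : ℝ≥0∞) [Fact (1 ≤ p)] (hp : p ≠ ⊤)
    (T : lp (fun _ : ℕ => ℝ) p →L[ℝ] lp (fun _ : ℕ => ℝ) p)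
    (hSBP : ∀ f g : lp (fun _ : ℕ => ℝ) p,
      {n : ℕ | f n ≠ 0} ∩ {n : ℕ | T g n ≠ 0} = ∅ →
      {n : ℕ | T f n ≠ 0} ∩ {n : ℕ | T g n ≠ 0} = ∅)
    (f g : lp (fun _ : ℕ => ℝ) p) :
    ∃ h : lp (fun _ : ℕ => ℝ) p,
      {n : ℕ | T h n ≠ 0} = {n : ℕ | T f n ≠ 0} \ {n : ℕ | T g n ≠ 0} := by
  have hT : IsSemiBandPreserving T := fun f g hfg =>
    Set.disjoint_iff_inter_eq_empty.2 (hSBP f g (Set.disjoint_iff_inter_eq_empty.1 hfg))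
  set f₁ := lp.indicator (support (T g)) f
  set f₂ := lp.indicator (support (T g))ᶜ f
  have h₂g : Disjoint (support (T f₂)) (support (T g)) :=
    hT.disjoint_support_apply_indicator_compl g f
  have h₁₂ : Disjoint (support (T f₁)) (support (T f₂)) :=
    hT _ _ <| Set.disjoint_left.2 fun i hi =>
      Set.disjoint_right.1 h₂g (Set.support_indicator_subset hi)
  have hf : f₁ + f₂ = f := lp.indicator_add_indicator_compl _ f
  have hTf : ∀ n, T f n = T f₁ n + T f₂ n := fun n => by
    rw [← hf, map_add]
    rfl
  refine ⟨f₂, Set.ext fun n => ⟨fun hn => ?_, fun ⟨hfn, hgn⟩ => ?_⟩⟩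
  · have hgn : T g n = 0 := not_ne_iff.1 (Set.disjoint_left.1 h₂g hn)
    have hf₁n : T f₁ n = 0 := not_ne_iff.1 (Set.disjoint_right.1 h₁₂ hn)
    exact ⟨by simpa [hTf n, hf₁n] using hn, not_not.2 hgn⟩
  · have hf₁n : T f₁ n = 0 := hT.apply_indicator_support_eq_zero hp (not_not.1 hgn) hfn f
    simpa [hTf n, hf₁n] using hfn

/-- If `T` is a semi band preserving continuous linear operator on `ℓ^p`
(`1 ≤ p < ∞`) and `supp (T g) ⊆ supp (T f)`, then `supp (T f) \ supp (T g)` is also the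
support of some element of the range of `T`. -/
theorem lp_sbp_exists_support_eq_diff
    (p : ℝ≥0∞) [Fact (1 ≤ p)] (hp : p ≠ ⊤)
    (T : lp (fun _ : ℕ => ℝ) p →L[ℝ] lp (fun _ : ℕ => ℝ) p)
    (hSBP : ∀ f g : lp (fun _ : ℕ => ℝ) p,
      {n : ℕ | f n ≠ 0} ∩ {n : ℕ | T g n ≠ 0} = ∅ →
      {n : ℕ | T f n ≠ 0} ∩ {n : ℕ | T g n ≠ 0} = ∅)
    (f g : lp (fun _ : ℕ => ℝ) p)
    (hsub : {n : ℕ | T g n ≠ 0} ⊆ {n : ℕ | T f n ≠ 0}) :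
    ∃ h : lp (fun _ : ℕ => ℝ) p,
      {n : ℕ | T h n ≠ 0} = {n : ℕ | T f n ≠ 0} \ {n : ℕ | T g n ≠ 0} :=
  lp_sbp_exists_support_eq_diff_general p hp T hSBP f g
end

section
/- Let (Ω, Σ, μ) be a σ-finite measure space, 1 ≤ p < ∞, and let P be a continuous linear operator on X = Lp(Ω, μ; ℝ) with P ∘ P = P and operator norm at most one, which is semi containment preserving: for all f, g ∈ X, if supp f ⊆ supp(Pg) up to a μ-null set then supp(Pf) ⊆ supp(Pg) up to a μ-null set. If (f_j)_{j∈ℕ} is a sequence in X with supp(P f_{j+1}) ⊆ supp(P f_j) up to μ-null sets for all j, then there exists g ∈ X such that supp(Pg) equals ⋂_{j∈ℕ} supp(P f_j), up to a μ-null set. -/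
open MeasureTheory
open scoped ENNReal

/-!
Let `u = P f₀` and `S = ⋂ j, supp (P fⱼ)`, and split `u = a + b` with `a = 1_S u`, `b = 1_{Sᶜ} u`.
Since `supp a ⊆ S ⊆ supp (P fⱼ)` for every `j`, semi containment preservation gives
`supp (P a) ⊆ S`, so `P b = u - P a` agrees with `b` off `S`. As `‖P b‖_p ≤ ‖b‖_p` and `b`
vanishes on `S`, the additivity of `‖·‖_p ^ p` over `S` and `Sᶜ` forces `P b = 0` on `S`.
Hence `P a = 1_S u`, whose support is `S` because `S ⊆ supp u`.
-/

namespace MeasureTheory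

section Restrict

variable {α E : Type*} [MeasurableSpace α] {μ : Measure α} [NormedAddCommGroup E]
  {p : ℝ≥0∞} {s : Set α} {g h : α → E}

theorem lintegral_rpow_enorm_le_of_eLpNorm_le (hp0 : p ≠ 0) (hp : p ≠ ∞)
    (hgh : eLpNorm g p μ ≤ eLpNorm h p μ) :
    ∫⁻ x, ‖g x‖ₑ ^ p.toReal ∂μ ≤ ∫⁻ x, ‖h x‖ₑ ^ p.toReal ∂μ := by
  have hq : 0 < p.toReal := ENNReal.toReal_pos hp0 hp
  rw [eLpNorm_eq_eLpNorm' hp0 hp, eLpNorm_eq_eLpNorm' hp0 hp] at hgh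
  rw [lintegral_rpow_enorm_eq_rpow_eLpNorm' hq, lintegral_rpow_enorm_eq_rpow_eLpNorm' hq]
  exact ENNReal.rpow_le_rpow hgh hq.le

theorem ae_restrict_eq_zero_of_eLpNorm_le (hs : MeasurableSet s) (hp0 : p ≠ 0) (hp : p ≠ ∞)
    (hg : AEStronglyMeasurable g μ) (hh : eLpNorm h p μ ≠ ∞)
    (hgh : eLpNorm g p μ ≤ eLpNorm h p μ) (hcompl : g =ᵐ[μ.restrict sᶜ] h)
    (hzero : h =ᵐ[μ.restrict s] 0) : g =ᵐ[μ.restrict s] 0 := by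
  have hq : 0 < p.toReal := ENNReal.toReal_pos hp0 hp
  have hh_s : ∫⁻ x in s, ‖h x‖ₑ ^ p.toReal ∂μ = 0 :=
    (lintegral_congr_ae (hzero.fun_comp fun y => ‖y‖ₑ ^ p.toReal)).trans (by simp [hq])
  have hg_sc : ∫⁻ x in sᶜ, ‖g x‖ₑ ^ p.toReal ∂μ = ∫⁻ x in sᶜ, ‖h x‖ₑ ^ p.toReal ∂μ :=
    lintegral_congr_ae (hcompl.fun_comp fun y => ‖y‖ₑ ^ p.toReal)
  have hh_sc : ∫⁻ x in sᶜ, ‖h x‖ₑ ^ p.toReal ∂μ ≠ ∞ :=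
    ne_top_of_le_ne_top ((eLpNorm_lt_top_iff_lintegral_rpow_enorm_lt_top hp0 hp).1
      hh.lt_top).ne (setLIntegral_le_lintegral _ _)
  have hg_s : ∫⁻ x in s, ‖g x‖ₑ ^ p.toReal ∂μ = 0 := by
    have := lintegral_rpow_enorm_le_of_eLpNorm_le hp0 hp hgh
    rw [← lintegral_add_compl (fun x => ‖g x‖ₑ ^ p.toReal) hs,
      ← lintegral_add_compl (fun x => ‖h x‖ₑ ^ p.toReal) hs, hh_s, zero_add, hg_sc] at this
    exact le_zero_iff.1 (ENNReal.le_of_add_le_add_right hh_sc (by simpa using this))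
  rw [← eLpNorm_eq_zero_iff hg.restrict hp0, eLpNorm_eq_lintegral_rpow_enorm_toReal hp0 hp, hg_s,
    ENNReal.zero_rpow_of_pos (by positivity)]

theorem ae_restrict_compl_eq_zero_of_support_ae_le (hs : MeasurableSet s)
    (hg : Function.support g ≤ᵐ[μ] s) : g =ᵐ[μ.restrict sᶜ] 0 :=
  (ae_restrict_iff' hs.compl).2 <| hg.mono fun _ hx hxs => not_not.1 fun hne => hxs (hx hne)

end Restrict

section Projection

variable {Ω E : Type*} [MeasurableSpace Ω] {μ : Measure Ω} [NormedAddCommGroup E]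
  [NormedSpace ℝ E] {p : ℝ≥0∞} [Fact (1 ≤ p)]

def SemiContainmentPreserving (P : Lp E p μ →L[ℝ] Lp E p μ) : Prop :=
  ∀ f g : Lp E p μ, Function.support ⇑f ≤ᵐ[μ] Function.support ⇑(P g) →
    Function.support ⇑(P f) ≤ᵐ[μ] Function.support ⇑(P g)

theorem SemiContainmentPreserving.support_apply_ae_le_iInter {P : Lp E p μ →L[ℝ] Lp E p μ}
    (hP : SemiContainmentPreserving P) {ι : Type*} [Countable ι] (f : ι → Lp E p μ)
    {a : Lp E p μ} (ha : Function.support ⇑a ≤ᵐ[μ] ⋂ i, Function.support ⇑(P (f i))) :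
    Function.support ⇑(P a) ≤ᵐ[μ] ⋂ i, Function.support ⇑(P (f i)) :=
  (ae_all_iff.2 fun i => hP a (f i) (ha.trans (Set.iInter_subset _ i).eventuallyLE)).mono
    fun _ hx hxa => Set.mem_iInter.2 fun i => hx i hxa

theorem exists_apply_ae_eq_indicator_of_norm_le_one (hp : p ≠ ∞)
    (P : Lp E p μ →L[ℝ] Lp E p μ) (hnorm : ‖P‖ ≤ 1) {u : Lp E p μ} (hu : P u = u)
    {s : Set Ω} (hs : MeasurableSet s)
    (hinv : ∀ a : Lp E p μ, Function.support ⇑a ≤ᵐ[μ] s → Function.support ⇑(P a) ≤ᵐ[μ] s) :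
    ∃ g : Lp E p μ, ⇑(P g) =ᵐ[μ] s.indicator ⇑u := by
  have hp0 : p ≠ 0 := (zero_lt_one.trans_le Fact.out).ne'
  set b : Lp E p μ := ((Lp.memLp u).indicator hs.compl).toLp _
  have hb : ⇑b =ᵐ[μ] sᶜ.indicator ⇑u := MemLp.coeFn_toLp _
  have hPsub : ⇑(P (u - b)) =ᵐ[μ] ⇑u - ⇑(P b) := by
    rw [map_sub, hu]
    exact Lp.coeFn_sub _ _
  have hPa_sc : ⇑(P (u - b)) =ᵐ[μ.restrict sᶜ] 0 := by
    refine ae_restrict_compl_eq_zero_of_support_ae_le hs (hinv _ ?_)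
    filter_upwards [Lp.coeFn_sub u b, hb] with x hsub hbx hne
    by_contra hxs
    exact hne (by rw [hsub, Pi.sub_apply, hbx, Set.indicator_of_mem hxs, sub_self])
  have hPb_sc : ⇑(P b) =ᵐ[μ.restrict sᶜ] ⇑b := by
    filter_upwards [ae_restrict_of_ae hPsub, hPa_sc, ae_restrict_of_ae hb,
      ae_restrict_mem hs.compl] with x h1 h2 h3 hx
    rw [h2, Pi.sub_apply, Pi.zero_apply, eq_comm, sub_eq_zero] at h1
    rw [h3, Set.indicator_of_mem hx, h1]
  have hb_s : ⇑b =ᵐ[μ.restrict s] 0 := by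
    filter_upwards [ae_restrict_of_ae hb, ae_restrict_mem hs] with x hbx hx
    rw [hbx, Set.indicator_of_notMem (Set.notMem_compl_iff.2 hx), Pi.zero_apply]
  have hPb_le : eLpNorm (P b) p μ ≤ eLpNorm b p μ := by
    rw [← Lp.enorm_def, ← Lp.enorm_def, enorm_le_iff_norm_le]
    exact P.le_of_opNorm_le hnorm b |>.trans_eq (one_mul _)
  have hPb_s : ⇑(P b) =ᵐ[μ.restrict s] 0 :=
    ae_restrict_eq_zero_of_eLpNorm_le hs hp0 hp (Lp.aestronglyMeasurable _) (Lp.eLpNorm_ne_top b)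
      hPb_le hPb_sc hb_s
  refine ⟨u - b, ae_of_ae_restrict_of_ae_restrict_compl s ?_ ?_⟩
  · filter_upwards [ae_restrict_of_ae hPsub, hPb_s, ae_restrict_mem hs] with x h1 h2 hx
    rw [h1, Pi.sub_apply, h2, Pi.zero_apply, sub_zero, Set.indicator_of_mem hx]
  · filter_upwards [hPa_sc, ae_restrict_mem hs.compl] with x h1 hx
    rw [h1, Pi.zero_apply, Set.indicator_of_notMem hx]

end Projection

end MeasureTheory

theorem scp_proj_exists_support_eq_iInter_general
    {Ω : Type*} [MeasurableSpace Ω] (μ : Measure Ω)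
    (p : ℝ≥0∞) [Fact (1 ≤ p)] (hp : p ≠ ⊤)
    (P : Lp ℝ p μ →L[ℝ] Lp ℝ p μ)
    (hproj : ∀ f : Lp ℝ p μ, P (P f) = P f) (hnorm : ‖P‖ ≤ 1)
    (hSCP : ∀ f g : Lp ℝ p μ,
      Function.support ⇑f ≤ᵐ[μ] (Function.support ⇑(P g) : Set Ω) →
      Function.support ⇑(P f) ≤ᵐ[μ] (Function.support ⇑(P g) : Set Ω))
    (f : ℕ → Lp ℝ p μ) :
    ∃ g : Lp ℝ p μ,
      Function.support ⇑(P g) =ᵐ[μ]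
        ((⋂ j : ℕ, Function.support ⇑(P (f j)) : Set Ω)) := by
  set S := ⋂ j : ℕ, Function.support ⇑(P (f j))
  have hS : MeasurableSet S :=
    .iInter fun j => measurableSet_support (Lp.stronglyMeasurable _).measurable
  obtain ⟨g, hg⟩ := exists_apply_ae_eq_indicator_of_norm_le_one hp P hnorm (hproj (f 0)) hS
    fun a ha => SemiContainmentPreserving.support_apply_ae_le_iInter hSCP f ha
  refine ⟨g, Filter.eventuallyEq_set.2 (hg.mono fun x hx => ?_)⟩
  rw [Function.mem_support, hx, ← Function.mem_support, Set.support_indicator,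
    Set.inter_eq_left.2 (Set.iInter_subset _ 0)]

/-- Let `P` be a semi containment preserving contractive projection on
`Lp(Ω, μ; ℝ)` (`μ` σ-finite, `1 ≤ p < ∞`). If `(f_j)` is a sequence with a.e.-decreasing
supports of `P f_j`, then `⋂ j, supp (P f_j)` is, up to a `μ`-null set, the support of some
element of the range of `P`. -/
theorem scp_proj_exists_support_eq_iInter
    {Ω : Type*} [MeasurableSpace Ω] (μ : Measure Ω) [SigmaFinite μ]
    (p : ℝ≥0∞) [Fact (1 ≤ p)] (hp : p ≠ ⊤)
    (P : Lp ℝ p μ →L[ℝ] Lp ℝ p μ)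
    (hproj : ∀ f : Lp ℝ p μ, P (P f) = P f) (hnorm : ‖P‖ ≤ 1)
    (hSCP : ∀ f g : Lp ℝ p μ,
      Function.support ⇑f ≤ᵐ[μ] (Function.support ⇑(P g) : Set Ω) →
      Function.support ⇑(P f) ≤ᵐ[μ] (Function.support ⇑(P g) : Set Ω))
    (f : ℕ → Lp ℝ p μ)
    (hdec : ∀ j : ℕ,
      Function.support ⇑(P (f (j + 1))) ≤ᵐ[μ] (Function.support ⇑(P (f j)) : Set Ω)) :
    ∃ g : Lp ℝ p μ,
      Function.support ⇑(P g) =ᵐ[μ]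
        ((⋂ j : ℕ, Function.support ⇑(P (f j)) : Set Ω)) :=
  scp_proj_exists_support_eq_iInter_general μ p hp P hproj hnorm hSCP f
end

section
/- For every 1 ≤ p < ∞ there exists a continuous linear operator T on X = Lp([0,1]; ℝ) (with Lebesgue measure) such that T ∘ T = T, T is semi band preserving, the range of T is a two-dimensional subspace, and no two nonzero elements of the range of T have almost-everywhere disjoint supports; in particular, T is not a weighted conditional expectation operator. -/
open MeasureTheory
open scoped ENNReal

/-- Lebesgue measure on the unit interval `[0,1]`, as a measure on `ℝ`. -/
noncomputable def μ01 : Measure ℝ := volume.restrict (Set.Icc (0 : ℝ) 1)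

/-!
Let `V ⊆ Lp` be the span of `1` and `x`. Being finite-dimensional, `V` is the range of a
continuous projection `T` (Hahn–Banach). A nonzero `a + b x` vanishes at most at one point, so
every nonzero element of `V` has conull support; this makes `T` semi band preserving and rules
out disjointly supported pairs in `V`.

If an idempotent `T` had a representation `T f = ∑ ψⱼ(f) uⱼ` with disjointly supported `uⱼ`, then
`ψᵢ(uⱼ) = 0` for `i ≠ j`, hence `T uⱼ = ψⱼ(uⱼ) uⱼ` and `T f = T (T f) = ∑ ψⱼ(uⱼ) ψⱼ(f) uⱼ`.
So the range of `T` is spanned by the `uⱼ` with `ψⱼ(uⱼ) ≠ 0`, each of which lies in the range;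
a two-dimensional range needs two of them, and they are disjointly supported.
-/

open Module Function

section WeightedSum

variable {𝕜 E J : Type*} [NormedField 𝕜] [NormedAddCommGroup E] [NormedSpace 𝕜 E]
  {T : E →L[𝕜] E} {u : J → E} {ψ : J → StrongDual 𝕜 E}

theorem apply_eq_smul_of_hasSum (hψu : Pairwise fun i j => ψ i (u j) = 0)
    (hT : ∀ f, HasSum (fun j => ψ j f • u j) (T f)) (k : J) :
    T (u k) = ψ k (u k) • u k :=
  (hT (u k)).unique <| hasSum_single k fun j hj => by rw [hψu hj, zero_smul]

theorem map_apply_eq_mul_of_hasSum (hψu : Pairwise fun i j => ψ i (u j) = 0)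
    (hT : ∀ f, HasSum (fun j => ψ j f • u j) (T f)) (k : J) (f : E) :
    ψ k (T f) = ψ k (u k) * ψ k f := by
  have := ((ψ k).hasSum (hT f)).unique <|
    hasSum_single k fun j hj => by rw [map_smul, hψu hj.symm, smul_zero]
  rw [this, map_smul, smul_eq_mul, mul_comm]

theorem mem_range_of_hasSum (hψu : Pairwise fun i j => ψ i (u j) = 0)
    (hT : ∀ f, HasSum (fun j => ψ j f • u j) (T f)) {k : J} (hk : ψ k (u k) ≠ 0) :
    u k ∈ LinearMap.range (T : E →ₗ[𝕜] E) :=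
  ⟨(ψ k (u k))⁻¹ • u k, by
    simp [apply_eq_smul_of_hasSum hψu hT, smul_smul, inv_mul_cancel₀ hk]⟩

theorem hasSum_mul_smul_of_idempotent (hψu : Pairwise fun i j => ψ i (u j) = 0)
    (hT : ∀ f, HasSum (fun j => ψ j f • u j) (T f)) (hTT : ∀ f, T (T f) = T f) (f : E) :
    HasSum (fun j => (ψ j (u j) * ψ j f) • u j) (T f) := by
  simpa only [hTT, map_apply_eq_mul_of_hasSum hψu hT] using hT (T f)

theorem finrank_range_le_one_of_hasSum (hψu : Pairwise fun i j => ψ i (u j) = 0)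
    (hT : ∀ f, HasSum (fun j => ψ j f • u j) (T f)) (hTT : ∀ f, T (T f) = T f)
    (hunique : ∀ i j, ψ i (u i) ≠ 0 → ψ j (u j) ≠ 0 → i = j) :
    finrank 𝕜 (LinearMap.range (T : E →ₗ[𝕜] E)) ≤ 1 := by
  have hsum := hasSum_mul_smul_of_idempotent hψu hT hTT
  by_cases h : ∃ k, ψ k (u k) ≠ 0
  · obtain ⟨k, hk⟩ := h
    have hrange : LinearMap.range (T : E →ₗ[𝕜] E) ≤ 𝕜 ∙ u k := by
      rintro _ ⟨f, rfl⟩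
      have hf := (hsum f).unique <| hasSum_single k fun j hj => by
        rw [not_not.1 fun hj' => hj (hunique j k hj' hk), zero_mul, zero_smul]
      exact Submodule.mem_span_singleton.2 ⟨_, hf.symm⟩
    calc finrank 𝕜 (LinearMap.range (T : E →ₗ[𝕜] E)) ≤ finrank 𝕜 (𝕜 ∙ u k) :=
          Submodule.finrank_mono hrange
      _ ≤ 1 := (finrank_span_le_card {u k}).trans (by simp)
  · push Not at h
    have hzero : T = 0 := ContinuousLinearMap.ext fun f =>
      (hsum f).unique <| by simp [h, hasSum_zero]
    rw [hzero, ContinuousLinearMap.toLinearMap_zero, LinearMap.range_zero, finrank_bot]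
    exact zero_le_one

end WeightedSum

namespace MeasureTheory

section Support

variable {α E : Type*} [MeasurableSpace α] {μ : Measure α} {p : ℝ≥0∞} [NormedAddCommGroup E]

theorem Lp.measure_support_eq_zero_iff (f : Lp E p μ) : μ (support f) = 0 ↔ f = 0 := by
  rw [Lp.eq_zero_iff_ae_eq_zero, Filter.EventuallyEq, ae_iff]
  rfl

theorem Lp.ne_zero_of_ae_ne_zero [NeZero μ] {f : Lp E p μ} (hf : ∀ᵐ x ∂μ, f x ≠ 0) : f ≠ 0 := by
  rintro rfl
  obtain ⟨x, hx, hx0⟩ := (hf.and (Lp.coeFn_zero E p μ)).exists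
  exact hx hx0

theorem measure_support_inter_ne_zero [NeZero μ] {f g : α → E} (hf : ∀ᵐ x ∂μ, f x ≠ 0)
    (hg : ∀ᵐ x ∂μ, g x ≠ 0) : μ (support f ∩ support g) ≠ 0 := by
  intro h
  obtain ⟨x, ⟨hfx, hgx⟩, hx⟩ := ((hf.and hg).and (measure_eq_zero_iff_ae_notMem.1 h)).exists
  exact hx ⟨hfx, hgx⟩

theorem measure_support_eq_zero_of_inter {f g : α → E} (hg : ∀ᵐ x ∂μ, g x ≠ 0)
    (h : μ (support f ∩ support g) = 0) : μ (support f) = 0 := by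
  rw [measure_eq_zero_iff_ae_notMem] at h ⊢
  filter_upwards [h, hg] with x hx hgx hfx using hx ⟨hfx, hgx⟩

variable {𝕜 : Type*} [NormedField 𝕜] [NormedSpace 𝕜 E] [Fact (1 ≤ p)]

theorem Lp.measure_support_apply_inter_eq_zero_of_ae_ne_zero {T : Lp E p μ →L[𝕜] Lp E p μ}
    (hT : ∀ g, T g ≠ 0 → ∀ᵐ x ∂μ, T g x ≠ 0) {f g : Lp E p μ}
    (h : μ (support f ∩ support (T g)) = 0) : μ (support (T f) ∩ support (T g)) = 0 := by
  by_cases hg : T g = 0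
  · rw [hg]
    exact measure_mono_null Set.inter_subset_right ((Lp.measure_support_eq_zero_iff _).2 rfl)
  · rw [(Lp.measure_support_eq_zero_iff f).1 (measure_support_eq_zero_of_inter (hT g hg) h),
      map_zero]
    exact measure_mono_null Set.inter_subset_left ((Lp.measure_support_eq_zero_iff _).2 rfl)

end Support

end MeasureTheory

theorem ae_add_mul_ne_zero {μ : Measure ℝ} [NullSingletonClass μ] {a b : ℝ}
    (hab : a ≠ 0 ∨ b ≠ 0) : ∀ᵐ x ∂μ, a + b * x ≠ 0 := by
  refine ae_iff.2 (Set.Subsingleton.measure_zero (fun x hx y hy => ?_) μ)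
  simp only [ne_eq, not_not, Set.mem_ofPred_eq] at hx hy
  have hb : b ≠ 0 := by rintro rfl; simp_all
  exact mul_left_cancel₀ hb (by linarith)

instance : IsProbabilityMeasure μ01 := ⟨by simp [μ01, Real.volume_Icc]⟩

instance : NullSingletonClass μ01 := inferInstanceAs (NullSingletonClass (volume.restrict _))

theorem memLp_id_μ01 (p : ℝ≥0∞) : MemLp id p μ01 := by
  refine .of_bound continuous_id.aestronglyMeasurable 1 ?_
  filter_upwards [ae_restrict_mem measurableSet_Icc] with x hx
  simpa [abs_le] using ⟨by linarith [hx.1], hx.2⟩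

section AffineLp

variable (p : ℝ≥0∞)

noncomputable def affineLp : Submodule ℝ (Lp ℝ p μ01) :=
  Submodule.span ℝ {Lp.const p μ01 (1 : ℝ), (memLp_id_μ01 p).toLp id}

instance : FiniteDimensional ℝ (affineLp p) := .span_of_finite ℝ (Set.toFinite _)

theorem coeFn_smul_add_smul (a b : ℝ) :
    ⇑(a • Lp.const p μ01 (1 : ℝ) + b • (memLp_id_μ01 p).toLp id) =ᵐ[μ01] fun x => a + b * x := by
  filter_upwards [Lp.coeFn_add (a • Lp.const p μ01 (1 : ℝ)) (b • (memLp_id_μ01 p).toLp id),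
    Lp.coeFn_smul a (Lp.const p μ01 (1 : ℝ)), Lp.coeFn_smul b ((memLp_id_μ01 p).toLp id),
    Lp.coeFn_const (p := p) (μ := μ01) (1 : ℝ), (memLp_id_μ01 p).coeFn_toLp]
    with x h h₁ h₂ h₁' h₂'
  rw [h, Pi.add_apply, h₁, h₂, Pi.smul_apply, Pi.smul_apply, h₁', h₂']
  simp

theorem ae_ne_zero_of_mem_affineLp {v : Lp ℝ p μ01} (hv : v ∈ affineLp p) (hv0 : v ≠ 0) :
    ∀ᵐ x ∂μ01, v x ≠ 0 := by
  obtain ⟨a, b, rfl⟩ := Submodule.mem_span_pair.1 hv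
  have hab : a ≠ 0 ∨ b ≠ 0 := by
    by_contra! h
    simp [h.1, h.2] at hv0
  filter_upwards [coeFn_smul_add_smul p a b, ae_add_mul_ne_zero hab] with x hx hx'
  rwa [hx]

theorem finrank_affineLp : finrank ℝ (affineLp p) = 2 := by
  have hli : LinearIndependent ℝ ![Lp.const p μ01 (1 : ℝ), (memLp_id_μ01 p).toLp id] := by
    refine LinearIndependent.pair_iff.2 fun a b hab => ?_
    by_contra h
    refine Lp.ne_zero_of_ae_ne_zero ?_ hab
    filter_upwards [coeFn_smul_add_smul p a b, ae_add_mul_ne_zero (not_and_or.1 h)] with x hx hx'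
    rwa [hx]
  rw [affineLp, ← Matrix.range_cons_cons_empty _ _ ![], finrank_span_eq_card hli]
  simp

end AffineLp

theorem Submodule.ClosedComplemented.exists_idempotent_range_eq {R M : Type*} [Ring R]
    [TopologicalSpace M] [AddCommGroup M] [Module R M] {S : Submodule R M}
    (hS : S.ClosedComplemented) :
    ∃ T : M →L[R] M, (∀ f, T (T f) = T f) ∧ LinearMap.range (T : M →ₗ[R] M) = S := by
  obtain ⟨P, hP⟩ := hS
  refine ⟨S.subtypeL.comp P, fun f => by simp [hP], le_antisymm ?_ fun v hv => ?_⟩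
  · rintro _ ⟨f, rfl⟩
    exact (P f).2
  · exact ⟨v, by simpa using congrArg Subtype.val (hP ⟨v, hv⟩)⟩

theorem exists_sbp_proj_not_weightedCondExp_general
    (p : ℝ≥0∞) [Fact (1 ≤ p)] :
    ∃ T : Lp ℝ p μ01 →L[ℝ] Lp ℝ p μ01,
      (∀ f : Lp ℝ p μ01, T (T f) = T f) ∧
      (∀ f g : Lp ℝ p μ01,
        μ01 (Function.support ⇑f ∩ Function.support ⇑(T g)) = 0 →
        μ01 (Function.support ⇑(T f) ∩ Function.support ⇑(T g)) = 0) ∧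
      Module.finrank ℝ (LinearMap.range (T : Lp ℝ p μ01 →ₗ[ℝ] Lp ℝ p μ01)) = 2 ∧
      (∀ x y : Lp ℝ p μ01, x ∈ Set.range T → y ∈ Set.range T → x ≠ 0 → y ≠ 0 →
        μ01 (Function.support ⇑x ∩ Function.support ⇑y) ≠ 0) ∧
      ¬ ∃ (J : Type) (u : J → Lp ℝ p μ01) (ψ : J → Lp ℝ p μ01 →L[ℝ] ℝ),
          (∀ j, u j ≠ 0) ∧
          (Pairwise fun i j =>
            μ01 (Function.support ⇑(u i) ∩ Function.support ⇑(u j)) = 0) ∧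
          (∀ j, ∀ f : Lp ℝ p μ01,
            μ01 (Function.support ⇑f ∩ Function.support ⇑(u j)) = 0 → ψ j f = 0) ∧
          (∀ f : Lp ℝ p μ01, HasSum (fun j => ψ j f • u j) (T f)) := by
  obtain ⟨T, hTT, hrange⟩ :=
    (Submodule.ClosedComplemented.of_finiteDimensional (affineLp p)).exists_idempotent_range_eq
  have hconull : ∀ v ∈ Set.range T, v ≠ 0 → ∀ᵐ x ∂μ01, v x ≠ 0 := by
    rintro _ ⟨f, rfl⟩
    exact ae_ne_zero_of_mem_affineLp p (hrange ▸ ⟨f, rfl⟩)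
  have hrank : finrank ℝ (LinearMap.range (T : Lp ℝ p μ01 →ₗ[ℝ] Lp ℝ p μ01)) = 2 := by
    rw [hrange, finrank_affineLp]
  have hnot_disjoint : ∀ x y : Lp ℝ p μ01, x ∈ Set.range T → y ∈ Set.range T → x ≠ 0 → y ≠ 0 →
      μ01 (support x ∩ support y) ≠ 0 := fun x y hx hy hx0 hy0 =>
    measure_support_inter_ne_zero (hconull x hx hx0) (hconull y hy hy0)
  refine ⟨T, hTT, fun f g => Lp.measure_support_apply_inter_eq_zero_of_ae_ne_zero
    (fun g hg => hconull _ ⟨g, rfl⟩ hg), hrank, hnot_disjoint, ?_⟩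
  rintro ⟨J, u, ψ, hu, hdisj, hvanish, hsum⟩
  have hψu : Pairwise fun i j => ψ i (u j) = 0 := fun i j hij => hvanish i (u j) (hdisj hij.symm)
  by_cases h : ∃ i j, i ≠ j ∧ ψ i (u i) ≠ 0 ∧ ψ j (u j) ≠ 0
  · obtain ⟨i, j, hij, hi, hj⟩ := h
    exact hnot_disjoint (u i) (u j) (mem_range_of_hasSum hψu hsum hi)
      (mem_range_of_hasSum hψu hsum hj) (hu i) (hu j) (hdisj hij)
  · have := finrank_range_le_one_of_hasSum hψu hsum hTT fun i j hi hj => by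
      by_contra hij
      exact h ⟨i, j, hij, hi, hj⟩
    omega

/-- For every `1 ≤ p < ∞` there is a continuous linear projection on
`Lp([0,1]; ℝ)` which is semi band preserving, has two-dimensional range, and is such that no
two nonzero elements of its range have a.e. disjoint supports; in particular it is not a
weighted conditional expectation operator. -/
theorem exists_sbp_proj_not_weightedCondExp
    (p : ℝ≥0∞) [Fact (1 ≤ p)] (hp : p ≠ ⊤) :
    ∃ T : Lp ℝ p μ01 →L[ℝ] Lp ℝ p μ01,
      (∀ f : Lp ℝ p μ01, T (T f) = T f) ∧
      (∀ f g : Lp ℝ p μ01,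
        μ01 (Function.support ⇑f ∩ Function.support ⇑(T g)) = 0 →
        μ01 (Function.support ⇑(T f) ∩ Function.support ⇑(T g)) = 0) ∧
      Module.finrank ℝ (LinearMap.range (T : Lp ℝ p μ01 →ₗ[ℝ] Lp ℝ p μ01)) = 2 ∧
      (∀ x y : Lp ℝ p μ01, x ∈ Set.range T → y ∈ Set.range T → x ≠ 0 → y ≠ 0 →
        μ01 (Function.support ⇑x ∩ Function.support ⇑y) ≠ 0) ∧
      ¬ ∃ (J : Type) (u : J → Lp ℝ p μ01) (ψ : J → Lp ℝ p μ01 →L[ℝ] ℝ),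
          (∀ j, u j ≠ 0) ∧
          (Pairwise fun i j =>
            μ01 (Function.support ⇑(u i) ∩ Function.support ⇑(u j)) = 0) ∧
          (∀ j, ∀ f : Lp ℝ p μ01,
            μ01 (Function.support ⇑f ∩ Function.support ⇑(u j)) = 0 → ψ j f = 0) ∧
          (∀ f : Lp ℝ p μ01, HasSum (fun j => ψ j f • u j) (T f)) :=
  exists_sbp_proj_not_weightedCondExp_general p
end
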